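/- Let φ : 𝒳 → Prop be a predicate with P(φ(X)) ≤ ε and P(φ(X_cf) ∧ ¬φ(X)) = γ. For any classifier h : 𝒳 → Bool, there exists a classifier h₂ with P(h(X) ≠ h₂(X)) ≤ ε and influence ι(h₂) = P(h₂(X) ≠ h₂(X_cf)) ≤ 1 - γ/2. -/

import Mathlib

/-!
Let `A` be the event `φ (X_cf) ∧ ¬φ (X)`, of probability `γ`. One of the two values `b` of
`h (X)` is taken on at least half of `A`. The classifier `h₂` that equals `b` on `φ` and `h`
elsewhere differs from `h (X)` only where `φ (X)` holds, and on `A ∩ {h (X) = b}` both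
`h₂ (X) = h (X) = b` and `h₂ (X_cf) = b`, so `h₂` is invariant there.
-/

open Finset

noncomputable def Pr {Ω : Type*} [Fintype Ω] (p : Ω → ℝ) (E : Ω → Prop) [DecidablePred E] : ℝ :=
  ∑ ω, if E ω then p ω else 0

section Pr

variable {Ω : Type*} [Fintype Ω] (p : Ω → ℝ)

lemma Pr_mono (hp : ∀ ω, 0 ≤ p ω) {E F : Ω → Prop} [DecidablePred E] [DecidablePred F]
    (hEF : ∀ ω, E ω → F ω) : Pr p E ≤ Pr p F :=
  Finset.sum_le_sum fun ω _ => by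
    by_cases hE : E ω
    · simp [hE, hEF ω hE]
    · simp only [hE, if_false]
      split_ifs <;> simp [hp ω]

lemma Pr_and_add_Pr_and_not (E Q : Ω → Prop) [DecidablePred E] [DecidablePred Q] :
    Pr p (fun ω => E ω ∧ Q ω) + Pr p (fun ω => E ω ∧ ¬Q ω) = Pr p E := by
  simp only [Pr, ← Finset.sum_add_distrib]
  refine Finset.sum_congr rfl fun ω _ => ?_
  by_cases hE : E ω <;> by_cases hQ : Q ω <;> simp [hE, hQ]

lemma Pr_not (hsum : ∑ ω, p ω = 1) (E : Ω → Prop) [DecidablePred E] :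
    Pr p (fun ω => ¬E ω) = 1 - Pr p E := by
  rw [eq_sub_iff_add_eq, ← hsum]
  simp only [Pr, ← Finset.sum_add_distrib]
  refine Finset.sum_congr rfl fun ω _ => ?_
  by_cases hE : E ω <;> simp [hE]

lemma exists_half_le_Pr_and_eq (E : Ω → Prop) [DecidablePred E] (f : Ω → Bool) :
    ∃ b, Pr p E / 2 ≤ Pr p (fun ω => E ω ∧ f ω = b) := by
  have hsplit := Pr_and_add_Pr_and_not p E (fun ω => f ω = true)
  simp only [Bool.not_eq_true] at hsplit
  by_cases htrue : Pr p E / 2 ≤ Pr p (fun ω => E ω ∧ f ω = true)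
  · exact ⟨true, htrue⟩
  · exact ⟨false, by linarith⟩

end Pr

theorem exists_low_influence_general {Ω 𝒳 : Type*} [Fintype Ω]
    (p : Ω → ℝ) (hp : ∀ ω, 0 ≤ p ω) (hsum : ∑ ω, p ω = 1)
    (X Xcf : Ω → 𝒳) (φ : 𝒳 → Prop) [DecidablePred φ] (ε γ : ℝ)
    (hε : Pr p (fun ω => φ (X ω)) ≤ ε)
    (hγ : Pr p (fun ω => φ (Xcf ω) ∧ ¬φ (X ω)) = γ)
    (h : 𝒳 → Bool) :
    ∃ h₂ : 𝒳 → Bool,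
      Pr p (fun ω => h (X ω) ≠ h₂ (X ω)) ≤ ε ∧
      Pr p (fun ω => h₂ (X ω) ≠ h₂ (Xcf ω)) ≤ 1 - γ / 2 := by
  obtain ⟨b, hb⟩ :=
    exists_half_le_Pr_and_eq p (fun ω => φ (Xcf ω) ∧ ¬φ (X ω)) (fun ω => h (X ω))
  set h₂ : 𝒳 → Bool := fun x => if φ x then b else h x
  refine ⟨h₂, (Pr_mono p hp fun ω hne => ?_).trans hε, ?_⟩
  · by_contra hφ
    simp [h₂, hφ] at hne
  · have hagree : Pr p (fun ω => (φ (Xcf ω) ∧ ¬φ (X ω)) ∧ h (X ω) = b) ≤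
        Pr p (fun ω => h₂ (X ω) = h₂ (Xcf ω)) :=
      Pr_mono p hp fun ω ⟨⟨hcf, hx⟩, hhb⟩ => by simp [h₂, hcf, hx, hhb]
    rw [Pr_not p hsum]
    linarith

/-- Other half of Theorem 1: there exists a classifier `h₂` close to `h` on the
data distribution with influence at most `1 - γ/2`. -/
theorem exists_low_influence {Ω 𝒳 : Type*} [Fintype Ω] [Fintype 𝒳] [DecidableEq 𝒳]
    (p : Ω → ℝ) (hp : ∀ ω, 0 ≤ p ω) (hsum : ∑ ω, p ω = 1)
    (X Xcf : Ω → 𝒳) (φ : 𝒳 → Prop) [DecidablePred φ] (ε γ : ℝ)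
    (hε : Pr p (fun ω => φ (X ω)) ≤ ε)
    (hγ : Pr p (fun ω => φ (Xcf ω) ∧ ¬φ (X ω)) = γ)
    (h : 𝒳 → Bool) :
    ∃ h₂ : 𝒳 → Bool,
      Pr p (fun ω => h (X ω) ≠ h₂ (X ω)) ≤ ε ∧
      Pr p (fun ω => h₂ (X ω) ≠ h₂ (Xcf ω)) ≤ 1 - γ / 2 :=
  exists_low_influence_general p hp hsum X Xcf φ ε γ hε hγ h
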